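/- arXiv:1306.4850 — 3 statements merged into one kernel-verified Lean document; each statement's English description precedes it below -/
import Mathlib

section
/- Let K = {x ∈ ℝⁿ : ⟨aᵢ, x⟩ ≤ bᵢ, i = 1,…,m} be a convex polyhedron containing the origin, with aᵢ ≠ 0 for all i (so bᵢ ≥ 0 for all i). Then K* = { Σᵢ μᵢ aᵢ : μᵢ ≥ 0 for all i, and Σᵢ μᵢ bᵢ ≤ 1 }. -/
/-!
A point `y` lies in the right-hand side exactly when `(y, 1)` lies in the cone spanned by the
`(aᵢ, bᵢ)` and `(0, 1)`. Finitely generated cones are closed (Carathéodory: they are finite unions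
of cones on linearly independent generators), so if `(y, 1)` is outside this cone, Farkas' lemma
separates it by a functional. The Riesz representative of that functional, suitably rescaled, is a
point `x` of the polyhedron with `⟪x, y⟫ > 1`, so `y` is not in the polar.
-/

def polar {n : ℕ} (K : Set (EuclideanSpace ℝ (Fin n))) : Set (EuclideanSpace ℝ (Fin n)) :=
  {y | ∀ x ∈ K, (inner ℝ x y : ℝ) ≤ 1}

open Set Finset
open scoped NNReal

namespace PointedCone

section Algebraic

variable {ι F : Type*} [AddCommGroup F] [Module ℝ F] {v : ι → F} {x : F}

lemma mem_hull_image_finset_iff {s : Finset ι} :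
    x ∈ hull ℝ (v '' s) ↔ ∃ μ : ι → ℝ, (∀ i ∈ s, 0 ≤ μ i) ∧ ∑ i ∈ s, μ i • v i = x := by
  constructor
  · rw [Finsupp.mem_span_image_iff_linearCombination]
    rintro ⟨l, hl, rfl⟩
    refine ⟨fun i => l i, fun i _ => (l i).2, ?_⟩
    rw [Finsupp.linearCombination_apply, Finsupp.sum_of_support_subset l
      (by simpa [Finsupp.mem_supported] using hl) _ (by simp)]
    rfl
  · rintro ⟨μ, hμ, rfl⟩
    exact sum_mem fun i hi =>
      Submodule.smul_mem _ (⟨μ i, hμ i hi⟩ : ℝ≥0) (Submodule.subset_span (mem_image_of_mem v hi))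

lemma mem_hull_range_iff [Fintype ι] :
    x ∈ hull ℝ (range v) ↔ ∃ μ : ι → ℝ, (∀ i, 0 ≤ μ i) ∧ ∑ i, μ i • v i = x := by
  simpa using mem_hull_image_finset_iff (v := v) (x := x) (s := univ)

lemma exists_mem_hull_image_erase [DecidableEq ι] {s : Finset ι} (h : ¬LinearIndepOn ℝ v s)
    (hx : x ∈ hull ℝ (v '' s)) : ∃ j ∈ s, x ∈ hull ℝ (v '' ↑(s.erase j)) := by
  obtain ⟨μ, hμ, rfl⟩ := mem_hull_image_finset_iff.1 hx
  obtain ⟨g, hg, hpos⟩ : ∃ g : ι → ℝ, ∑ i ∈ s, g i • v i = 0 ∧ ∃ i ∈ s, 0 < g i := by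
    obtain ⟨g, hg, i, hi, hgi⟩ := not_linearIndepOn_finset_iff.1 h
    rcases hgi.lt_or_gt with hneg | hpos
    · exact ⟨-g, by simp [hg], i, hi, by simpa using hneg⟩
    · exact ⟨g, hg, i, hi, hpos⟩
  -- Move along the relation `g` until the first coefficient of `μ` vanishes.
  obtain ⟨j, hj, hmin⟩ := {i ∈ s | 0 < g i}.exists_min_image (fun i => μ i / g i)
    (by simpa [Finset.Nonempty] using hpos)
  rw [mem_filter] at hj
  set t := μ j / g j
  have ht : 0 ≤ t := div_nonneg (hμ j hj.1) hj.2.le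
  have hμj : μ j - t * g j = 0 := by simp [t, hj.2.ne']
  refine ⟨j, hj.1, mem_hull_image_finset_iff.2 ⟨fun i => μ i - t * g i, fun i hi => ?_, ?_⟩⟩
  · have hi := mem_of_mem_erase hi
    rw [sub_nonneg]
    by_cases hgi : 0 < g i
    · exact (le_div_iff₀ hgi).1 (hmin i (mem_filter.2 ⟨hi, hgi⟩))
    · exact (mul_nonpos_of_nonneg_of_nonpos ht (not_lt.1 hgi)).trans (hμ i hi)
  · rw [sum_erase _ (by simp [hμj])]
    simp [sub_smul, mul_smul, sum_sub_distrib, ← smul_sum, hg]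

end Algebraic

section Topological

variable {ι F : Type*} [AddCommGroup F] [Module ℝ F] [TopologicalSpace F]
  [IsTopologicalAddGroup F] [ContinuousSMul ℝ F] [T2Space F] {v : ι → F}

lemma isClosed_hull_range_of_linearIndependent [Fintype ι] (hv : LinearIndependent ℝ v) :
    IsClosed (hull ℝ (range v) : Set F) := by
  have : (hull ℝ (range v) : Set F) = Fintype.linearCombination ℝ v '' Ici 0 := by
    ext x
    simp [mem_hull_range_iff, Fintype.linearCombination_apply, Pi.le_def]
  rw [this]
  exact (LinearMap.isClosedEmbedding_of_injective (LinearMap.ker_eq_bot.2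
    (linearIndependent_iff_injective_fintypeLinearCombination.1 hv))).isClosedMap _ isClosed_Ici

lemma isClosed_hull_image_finset (s : Finset ι) : IsClosed (hull ℝ (v '' s) : Set F) := by
  classical
  induction s using Finset.strongInduction with
  | H s ih =>
  by_cases hs : LinearIndepOn ℝ v s
  · rw [image_eq_range]
    exact isClosed_hull_range_of_linearIndependent hs
  · have : (hull ℝ (v '' s) : Set F) = ⋃ j ∈ s, hull ℝ (v '' ↑(s.erase j)) := by
      refine Subset.antisymm (fun x hx => ?_) (iUnion₂_subset fun j _ => ?_)
      · simpa using exists_mem_hull_image_erase hs hx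
      · exact Submodule.span_mono (image_mono (coe_subset.2 (erase_subset j s)))
    rw [this]
    exact isClosed_biUnion_finset fun j hj => ih _ (erase_ssubset hj)

lemma isClosed_hull_range [Finite ι] : IsClosed (hull ℝ (range v) : Set F) := by
  have := Fintype.ofFinite ι
  simpa using isClosed_hull_image_finset (v := v) univ

theorem exists_strongDual_of_notMem_hull_range [Finite ι] [LocallyConvexSpace ℝ F] {x : F}
    (hx : x ∉ hull ℝ (range v)) : ∃ f : StrongDual ℝ F, (∀ i, 0 ≤ f (v i)) ∧ f x < 0 := by
  obtain ⟨f, hf, hfx⟩ :=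
    ProperCone.hyperplane_separation_point ⟨hull ℝ (range v), isClosed_hull_range⟩ hx
  exact ⟨f, fun i => hf _ (Submodule.subset_span (mem_range_self i)), hfx⟩

end Topological

end PointedCone

section Polyhedron

open PointedCone
open scoped InnerProductSpace

variable {ι E : Type*} [NormedAddCommGroup E] [InnerProductSpace ℝ E]
  {a : ι → E} {b : ι → ℝ} {x y : E}

lemma inner_sum_smul_le_one [Fintype ι] {μ : ι → ℝ} (hx : ∀ i, ⟪a i, x⟫_ℝ ≤ b i)
    (hμ : ∀ i, 0 ≤ μ i) (hμb : ∑ i, μ i * b i ≤ 1) : ⟪x, ∑ i, μ i • a i⟫_ℝ ≤ 1 :=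
  calc ⟪x, ∑ i, μ i • a i⟫_ℝ = ∑ i, μ i * ⟪a i, x⟫_ℝ := by
        simp [inner_sum, real_inner_smul_right, real_inner_comm]
    _ ≤ ∑ i, μ i * b i := sum_le_sum fun i _ => mul_le_mul_of_nonneg_left (hx i) (hμ i)
    _ ≤ 1 := hμb

lemma exists_inner_gt_one_of_inner_add_neg (hb : ∀ i, 0 ≤ b i) {z : E} {t : ℝ} (ht : 0 ≤ t)
    (hz : ∀ i, -⟪a i, z⟫_ℝ ≤ b i * t) (hzy : ⟪z, y⟫_ℝ + t < 0) :
    ∃ x, (∀ i, ⟪a i, x⟫_ℝ ≤ b i) ∧ 1 < ⟪x, y⟫_ℝ := by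
  -- Any scale `c` with `c * t ≤ 1 < -c * ⟪z, y⟫` works for `x = -c • z`.
  set c := 2 / (t - ⟪z, y⟫_ℝ)
  have hc : 0 < c := div_pos two_pos (by linarith)
  have hct : c * t ≤ 1 := by
    rw [div_mul_eq_mul_div, div_le_one (by linarith)]
    linarith
  have hcy : 1 < -c * ⟪z, y⟫_ℝ := by
    rw [neg_mul, ← mul_neg, div_mul_eq_mul_div, one_lt_div (by linarith)]
    linarith
  refine ⟨-c • z, fun i => ?_, by rwa [real_inner_smul_left]⟩
  rw [real_inner_smul_right]
  nlinarith [hz i, hb i]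

theorem exists_sum_smul_eq_of_forall_inner_le_one [Fintype ι] [CompleteSpace E]
    (hb : ∀ i, 0 ≤ b i) (hy : ∀ x, (∀ i, ⟪a i, x⟫_ℝ ≤ b i) → ⟪x, y⟫_ℝ ≤ 1) :
    ∃ μ : ι → ℝ, (∀ i, 0 ≤ μ i) ∧ ∑ i, μ i * b i ≤ 1 ∧ y = ∑ i, μ i • a i := by
  let w : Option ι → E × ℝ := fun o => o.elim (0, 1) fun i => (a i, b i)
  by_cases hmem : (y, 1) ∈ hull ℝ (range w)
  · obtain ⟨μ, hμ, hsum⟩ := mem_hull_range_iff.1 hmem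
    simp only [w, Fintype.sum_option, Prod.ext_iff, Prod.fst_add, Prod.snd_add, Prod.fst_sum,
      Prod.snd_sum, Option.elim, Prod.smul_fst, Prod.smul_snd, smul_eq_mul] at hsum
    exact ⟨fun i => μ (some i), fun i => hμ _, by linarith [hμ none], by simpa using hsum.1.symm⟩
  · obtain ⟨f, hf, hfy⟩ := exists_strongDual_of_notMem_hull_range hmem
    set t := f (0, 1)
    set z := (InnerProductSpace.toDual ℝ E).symm (f.comp (.inl ℝ E ℝ))
    have hf_apply (u : E) (s : ℝ) : f (u, s) = ⟪z, u⟫_ℝ + s * t := by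
      rw [InnerProductSpace.toDual_symm_apply, ← smul_eq_mul, ← map_smul]
      simp [← map_add]
    have ht : 0 ≤ t := hf none
    have hz (i : ι) : -⟪a i, z⟫_ℝ ≤ b i * t := by
      have := hf (some i)
      simp only [w, Option.elim, hf_apply, real_inner_comm] at this
      linarith
    obtain ⟨x, hx, hxy⟩ := exists_inner_gt_one_of_inner_add_neg hb ht hz
      (by simpa [hf_apply] using hfy)
    exact absurd (hy x hx) hxy.not_ge

end Polyhedron

theorem polar_polyhedron_general {n m : ℕ} (a : Fin m → EuclideanSpace ℝ (Fin n)) (b : Fin m → ℝ)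
    (h0 : ∀ i, (inner ℝ (a i) (0 : EuclideanSpace ℝ (Fin n)) : ℝ) ≤ b i) :
    polar {x | ∀ i, (inner ℝ (a i) x : ℝ) ≤ b i} =
      {y | ∃ μ : Fin m → ℝ, (∀ i, 0 ≤ μ i) ∧ (∑ i, μ i * b i) ≤ 1 ∧ y = ∑ i, μ i • a i} := by
  have hb (i : Fin m) : 0 ≤ b i := by simpa using h0 i
  ext y
  constructor
  · exact exists_sum_smul_eq_of_forall_inner_le_one hb
  · rintro ⟨μ, hμ, hμb, rfl⟩ x hx
    exact inner_sum_smul_le_one hx hμ hμb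

theorem polar_polyhedron {n m : ℕ} (a : Fin m → EuclideanSpace ℝ (Fin n)) (b : Fin m → ℝ)
    (ha : ∀ i, a i ≠ 0)
    (h0 : ∀ i, (inner ℝ (a i) (0 : EuclideanSpace ℝ (Fin n)) : ℝ) ≤ b i) :
    polar {x | ∀ i, (inner ℝ (a i) x : ℝ) ≤ b i} =
      {y | ∃ μ : Fin m → ℝ, (∀ i, 0 ≤ μ i) ∧ (∑ i, μ i * b i) ≤ 1 ∧ y = ∑ i, μ i • a i} :=
  polar_polyhedron_general a b h0
end

section
/- (Strong LP duality) Let A be a real m×n matrix, b ∈ ℝᵐ, c ∈ ℝⁿ. Suppose the primal program 'maximise ⟨c, x⟩ subject to Ax ≤ b' is feasible and bounded (the set {⟨c,x⟩ : Ax ≤ b} is nonempty and bounded above). Then the dual 'minimise ⟨b, y⟩ subject to Aᵀy = c, y ≥ 0' is feasible, and sup{⟨c,x⟩ : Ax ≤ b} = inf{⟨b,y⟩ : Aᵀy = c, y ≥ 0}. -/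
/-!
Weak duality gives `sup ≤ inf`. Conversely, apply Farkas' lemma to the system
`y ≥ 0, Aᵀ y = c, b ⬝ᵥ y ≤ sup` (with a slack variable): a certificate of infeasibility would
produce either a primal feasible point of value above `sup` or a feasible ray along which the
primal objective is unbounded. Farkas' lemma is hyperplane separation from the cone `M '' Ici 0`,
which is closed: by the conic Carathéodory theorem it is the finite union of the images of
closed sets on which `M` is injective.
-/

open scoped Matrix
open Function Set Topology Matrix

section Caratheodory

variable {ι : Type*} [Fintype ι]

lemma exists_nonneg_sub_smul_apply_eq_zero {y w : ι → ℝ} (hy : 0 ≤ y) (hw : ∃ i, 0 < w i) :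
    ∃ t : ℝ, 0 ≤ y - t • w ∧ ∃ i, 0 < w i ∧ y i - t * w i = 0 := by
  classical
  obtain ⟨i, hi, hmin⟩ := Finset.exists_min_image {i | 0 < w i} (fun i => y i / w i)
    (by simpa [Finset.Nonempty] using hw)
  rw [Finset.mem_filter_univ] at hi
  refine ⟨y i / w i, fun j => ?_, i, hi, by field_simp; ring⟩
  have hyj := hy j
  simp only [Pi.sub_apply, Pi.smul_apply, smul_eq_mul, Pi.zero_apply] at hyj ⊢
  by_cases hj : 0 < w j
  · have := hmin j ((Finset.mem_filter_univ _).2 hj)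
    rw [le_div_iff₀ hj] at this
    linarith
  · nlinarith [div_nonneg (hy i) hi.le]

variable {E : Type*} [AddCommGroup E] [Module ℝ E]

lemma LinearMap.exists_nonneg_apply_eq_support_ssubset (L : (ι → ℝ) →ₗ[ℝ] E) {y w : ι → ℝ}
    (hy : 0 ≤ y) (hwL : L w = 0) (hw : w ≠ 0) (hwy : support w ⊆ support y) :
    ∃ z, 0 ≤ z ∧ L z = L y ∧ support z ⊂ support y := by
  obtain ⟨v, hvL, hvy, hv⟩ : ∃ v, L v = 0 ∧ support v ⊆ support y ∧ ∃ i, 0 < v i := by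
    obtain ⟨i, hi⟩ := Function.ne_iff.1 hw
    rcases hi.lt_or_gt with h | h
    · exact ⟨-w, by simp [hwL], by simpa using hwy, i, by simpa using h⟩
    · exact ⟨w, hwL, hwy, i, h⟩
  obtain ⟨t, hz, i, hvi, hzi⟩ := exists_nonneg_sub_smul_apply_eq_zero hy hv
  refine ⟨y - t • v, hz, by simp [hvL], fun j hj => ?_, fun h => h (hvy hvi.ne') ?_⟩
  · by_contra hyj
    have hvj : v j = 0 := notMem_support.1 fun h => hyj (hvy h)
    simp [notMem_support.1 hyj, hvj] at hj
  · simpa using hzi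

theorem LinearMap.exists_nonneg_apply_eq_injective_on_support (L : (ι → ℝ) →ₗ[ℝ] E) {y : ι → ℝ}
    (hy : 0 ≤ y) :
    ∃ z, 0 ≤ z ∧ L z = L y ∧ ∀ w, L w = 0 → support w ⊆ support z → w = 0 := by
  obtain ⟨S, hS⟩ : ∃ S, support y = S := ⟨_, rfl⟩
  induction S using WellFoundedLT.induction generalizing y with
  | ind S ih =>
    by_cases h : ∀ w, L w = 0 → support w ⊆ support y → w = 0
    · exact ⟨y, hy, rfl, h⟩
    push Not at h
    obtain ⟨w, hwL, hwy, hw⟩ := h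
    obtain ⟨z, hz, hLz, hzy⟩ := L.exists_nonneg_apply_eq_support_ssubset hy hwL hw hwy
    obtain ⟨z', hz', hLz', hz'L⟩ := ih _ (hS ▸ hzy) hz rfl
    exact ⟨z', hz', hLz'.trans hLz, hz'L⟩

end Caratheodory

section Closed

variable {F E : Type*} [AddCommGroup F] [Module ℝ F] [TopologicalSpace F]
  [IsTopologicalAddGroup F] [ContinuousSMul ℝ F] [T2Space F] [FiniteDimensional ℝ F]
  [AddCommGroup E] [Module ℝ E] [TopologicalSpace E]
  [IsTopologicalAddGroup E] [ContinuousSMul ℝ E] [T2Space E]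

lemma LinearMap.isClosed_image_of_injOn (L : F →ₗ[ℝ] E) {p : Submodule ℝ F} (hL : InjOn L p)
    {K : Set F} (hK : IsClosed K) (hKp : K ⊆ p) : IsClosed (L '' K) := by
  have hemb : IsClosedEmbedding (L.domRestrict p) :=
    LinearMap.isClosedEmbedding_of_injective <|
      LinearMap.ker_eq_bot.2 fun a b h => Subtype.ext (hL a.2 b.2 h)
  have himage : L '' K = L.domRestrict p '' (Subtype.val ⁻¹' K) := by
    ext x
    simp only [mem_image, LinearMap.domRestrict_apply, mem_preimage, Subtype.exists]
    exact ⟨fun ⟨y, hy, hyx⟩ => ⟨y, hKp hy, hy, hyx⟩, fun ⟨y, _, hy, hyx⟩ => ⟨y, hy, hyx⟩⟩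
  rw [himage]
  exact hemb.isClosedMap _ (hK.preimage continuous_subtype_val)

theorem LinearMap.isClosed_image_nonneg {ι : Type*} [Fintype ι] (L : (ι → ℝ) →ₗ[ℝ] E) :
    IsClosed (L '' Ici 0) := by
  set good := {S : Set ι | ∀ w, L w = 0 → support w ⊆ S → w = 0}
  have hunion : L '' Ici 0 = ⋃ S ∈ good, L '' {y | 0 ≤ y ∧ support y ⊆ S} := by
    ext x
    simp only [mem_image, mem_iUnion, mem_Ici, mem_ofPred_eq, exists_prop]
    constructor
    · rintro ⟨y, hy, rfl⟩
      obtain ⟨z, hz, hLz, hzL⟩ := L.exists_nonneg_apply_eq_injective_on_support hy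
      exact ⟨support z, hzL, z, ⟨hz, subset_rfl⟩, hLz⟩
    · rintro ⟨S, -, y, ⟨hy, -⟩, rfl⟩
      exact ⟨y, hy, rfl⟩
  rw [hunion]
  refine (toFinite good).isClosed_biUnion fun S hS => ?_
  let p : Submodule ℝ (ι → ℝ) := Submodule.pi Sᶜ fun _ => ⊥
  have hp (y : ι → ℝ) : y ∈ p ↔ support y ⊆ S := by
    rw [support_subset_iff']
    simp [p, Submodule.mem_pi]
  have hK : {y : ι → ℝ | 0 ≤ y ∧ support y ⊆ S} = {y | 0 ≤ y} ∩ p := by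
    ext y; simp [hp]
  refine L.isClosed_image_of_injOn (p := p) (fun a ha b hb hab => ?_) ?_ ?_
  · exact sub_eq_zero.1 (hS _ (by simp [hab]) ((hp _).1 (p.sub_mem ha hb)))
  · rw [hK]; exact isClosed_Ici.inter p.closed_of_finiteDimensional
  · rw [hK]; exact inter_subset_right

end Closed

theorem Matrix.farkas {κ ι : Type*} [Fintype κ] [Fintype ι] (M : Matrix κ ι ℝ) (d : κ → ℝ)
    (h : ∀ y, 0 ≤ y → M *ᵥ y ≠ d) : ∃ z, 0 ≤ Mᵀ *ᵥ z ∧ d ⬝ᵥ z < 0 := by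
  classical
  let C := (ProperCone.positive ℝ (ι → ℝ)).map (LinearMap.toContinuousLinearMap M.mulVecLin)
  have hC (x : κ → ℝ) : x ∈ C ↔ ∃ y, 0 ≤ y ∧ M *ᵥ y = x := by
    simp [C, PointedCone.mem_closure, M.mulVecLin.isClosed_image_nonneg.closure_eq]
  obtain ⟨f, hfC, hfd⟩ := C.hyperplane_separation_point (x₀ := d) fun hd => by
    obtain ⟨y, hy, hyd⟩ := (hC d).1 hd
    exact h y hy hyd
  set z := (dotProductEquiv ℝ κ).symm f.toLinearMap
  have hf (x : κ → ℝ) : f x = z ⬝ᵥ x :=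
    (LinearMap.congr_fun ((dotProductEquiv ℝ κ).apply_symm_apply f.toLinearMap) x).symm
  refine ⟨z, fun i => ?_, by rwa [dotProduct_comm, ← hf]⟩
  have := hfC _ ((hC _).2 ⟨Pi.single i 1, by simp [Pi.single_nonneg], rfl⟩)
  rwa [hf, dotProduct_mulVec, dotProduct_single, mul_one, ← mulVec_transpose] at this

theorem Matrix.dotProduct_le_of_mulVec_le {m n : Type*} [Fintype m] [Fintype n]
    {A : Matrix m n ℝ} {b : m → ℝ} {x : n → ℝ} {y : m → ℝ} (hx : A *ᵥ x ≤ b) (hy : 0 ≤ y) :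
    (Aᵀ *ᵥ y) ⬝ᵥ x ≤ b ⬝ᵥ y := by
  rw [mulVec_transpose, ← dotProduct_mulVec, dotProduct_comm b]
  exact dotProduct_le_dotProduct_of_nonneg_left hx hy

theorem Matrix.dotProduct_nonpos_of_mulVec_nonpos {m n : Type*} [Fintype n]
    {A : Matrix m n ℝ} {b : m → ℝ} {c : n → ℝ} {r : ℝ} {x₀ : n → ℝ} (hx₀ : A *ᵥ x₀ ≤ b)
    (hr : ∀ x, A *ᵥ x ≤ b → c ⬝ᵥ x ≤ r) {d : n → ℝ} (hd : A *ᵥ d ≤ 0) : c ⬝ᵥ d ≤ 0 := by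
  by_contra! hcd
  set t := (r - c ⬝ᵥ x₀ + 1) / (c ⬝ᵥ d)
  have ht : 0 ≤ t := div_nonneg (by linarith [hr x₀ hx₀]) hcd.le
  have hfeas : A *ᵥ (x₀ + t • d) ≤ b := by
    rw [mulVec_add, mulVec_smul]
    exact add_le_of_le_of_nonpos hx₀ (smul_nonpos_of_nonneg_of_nonpos ht hd)
  have hval : c ⬝ᵥ (x₀ + t • d) = r + 1 := by
    rw [dotProduct_add, dotProduct_smul, smul_eq_mul, div_mul_cancel₀ _ hcd.ne']
    ring
  linarith [hr _ hfeas]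

theorem Matrix.exists_dual_le {m n : Type*} [Fintype m] [Fintype n] {A : Matrix m n ℝ}
    {b : m → ℝ} {c : n → ℝ} {r : ℝ} {x₀ : n → ℝ} (hx₀ : A *ᵥ x₀ ≤ b)
    (hr : ∀ x, A *ᵥ x ≤ b → c ⬝ᵥ x ≤ r) :
    ∃ y, 0 ≤ y ∧ Aᵀ *ᵥ y = c ∧ b ⬝ᵥ y ≤ r := by
  by_contra! hno
  -- Rows `some j` encode `Aᵀ y = c`; row `none` encodes `b ⬝ᵥ y + s = r` with slack `s = y none`.
  let M : Matrix (Option n) (Option m) ℝ := of fun j i =>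
    j.elim (i.elim 1 b) fun j => i.elim 0 fun i => A i j
  let d : Option n → ℝ := fun j => j.elim r c
  obtain ⟨z, hz, hzd⟩ := M.farkas d fun y hy hyd => by
    have hslack : y none + b ⬝ᵥ (y ∘ some) = r := by
      simpa [M, d, mulVec, dotProduct, Fintype.sum_option] using congrFun hyd none
    have hdual : Aᵀ *ᵥ (y ∘ some) = c := funext fun j => by
      simpa [M, d, mulVec, dotProduct, Fintype.sum_option] using congrFun hyd (some j)
    linarith [hno (y ∘ some) (fun i => hy (some i)) hdual, show 0 ≤ y none from hy none]
  set x : n → ℝ := fun j => z (some j)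
  have hl : 0 ≤ z none := by simpa [M, mulVec, dotProduct, Fintype.sum_option] using hz none
  have hAx : ∀ i, 0 ≤ b i * z none + (A *ᵥ x) i := by
    intro i
    simpa [M, x, mulVec, dotProduct, Fintype.sum_option] using hz (some i)
  have hcx : r * z none + c ⬝ᵥ x < 0 := by
    simpa [d, x, dotProduct, Fintype.sum_option] using hzd
  rcases hl.eq_or_lt with hl0 | hlpos
  · have hAx' : A *ᵥ (-x) ≤ 0 := fun i => by simpa [mulVec_neg, ← hl0] using hAx i
    have := dotProduct_nonpos_of_mulVec_nonpos hx₀ hr hAx'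
    simp only [dotProduct_neg, ← hl0] at this hcx
    linarith
  · have hfeas : A *ᵥ ((z none)⁻¹ • -x) ≤ b := fun i => by
      rw [mulVec_smul, mulVec_neg, Pi.smul_apply, smul_eq_mul, Pi.neg_apply,
        inv_mul_le_iff₀ hlpos]
      linarith [hAx i]
    have := hr _ hfeas
    rw [dotProduct_smul, smul_eq_mul, dotProduct_neg, inv_mul_le_iff₀ hlpos] at this
    linarith

theorem strong_lp_duality {m n : ℕ} (A : Matrix (Fin m) (Fin n) ℝ) (b : Fin m → ℝ)
    (c : Fin n → ℝ)
    (hne : {v : ℝ | ∃ x : Fin n → ℝ, A.mulVec x ≤ b ∧ v = c ⬝ᵥ x}.Nonempty)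
    (hbdd : BddAbove {v : ℝ | ∃ x : Fin n → ℝ, A.mulVec x ≤ b ∧ v = c ⬝ᵥ x}) :
    (∃ y : Fin m → ℝ, 0 ≤ y ∧ A.transpose.mulVec y = c) ∧
    sSup {v : ℝ | ∃ x : Fin n → ℝ, A.mulVec x ≤ b ∧ v = c ⬝ᵥ x} =
      sInf {w : ℝ | ∃ y : Fin m → ℝ, A.transpose.mulVec y = c ∧ 0 ≤ y ∧ w = b ⬝ᵥ y} := by
  set P := {v : ℝ | ∃ x : Fin n → ℝ, A *ᵥ x ≤ b ∧ v = c ⬝ᵥ x}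
  set D := {w : ℝ | ∃ y : Fin m → ℝ, Aᵀ *ᵥ y = c ∧ 0 ≤ y ∧ w = b ⬝ᵥ y}
  have weak_duality : ∀ v ∈ P, ∀ w ∈ D, v ≤ w := by
    rintro _ ⟨x, hx, rfl⟩ _ ⟨y, rfl, hy, rfl⟩
    exact dotProduct_le_of_mulVec_le hx hy
  obtain ⟨_, x₀, hx₀, rfl⟩ := hne
  obtain ⟨y, hy, hyc, hby⟩ :=
    exists_dual_le hx₀ (r := sSup P) fun x hx => le_csSup hbdd ⟨x, hx, rfl⟩
  refine ⟨⟨y, hy, hyc⟩, le_antisymm ?_ ?_⟩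
  · exact le_csInf ⟨_, y, hyc, hy, rfl⟩ fun w hw =>
      csSup_le ⟨_, x₀, hx₀, rfl⟩ fun v hv => weak_duality v hv w hw
  · exact (csInf_le ⟨_, weak_duality _ ⟨x₀, hx₀, rfl⟩⟩ ⟨y, hyc, hy, rfl⟩).trans hby
end

section
/- (Strong duality, origin-feasible case) Let A be a real m×n matrix, b ∈ ℝᵐ with b ≥ 0, c ∈ ℝⁿ with c ≠ 0. If sup{⟨c,x⟩ : Ax ≤ b} is finite, then there exists y ≥ 0 with Aᵀy = c, and sup{⟨c,x⟩ : Ax ≤ b} = inf{⟨b,y⟩ : Aᵀy = c, y ≥ 0}. -/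
/-!
The primal value `σ = sup {⟨c, x⟩ : A x ≤ b}` is finite, so every feasible `x` satisfies
`⟨c, x⟩ ≤ σ`. By Farkas' lemma this valid inequality is a nonnegative combination of the
constraints `⟨A i, x⟩ ≤ b i` and of the trivial inequality `0 ≤ 1`, which is exactly a dual
feasible `y` with `⟨b, y⟩ ≤ σ`; weak duality gives the reverse inequality. Farkas' lemma is the
separation theorem for closed convex cones, applied to the cone generated by the rows `(A i, b i)`
and `(0, 1)`; this cone is closed because, by Carathéodory's theorem for cones, it is a finite
union of images of orthants under injective linear maps.
-/

open Function
open scoped Matrix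

theorem exists_ne_zero_support_subset_linearCombination_eq_zero {R M ι : Type*} [Ring R]
    [AddCommGroup M] [Module R M] [Fintype ι] {v : ι → M} {s : Set ι}
    (hs : ¬LinearIndepOn R v s) :
    ∃ g : ι → R, g ≠ 0 ∧ support g ⊆ s ∧ Fintype.linearCombination R v g = 0 := by
  obtain ⟨f, hfs, hf, hf0⟩ := linearDepOn_iff'.mp hs
  refine ⟨f, by simpa using hf0, by simpa using (Finsupp.mem_supported _ _).mp hfs, ?_⟩
  rwa [Finsupp.linearCombination_apply, Finsupp.sum_fintype _ _ (by simp)] at hf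

theorem Fintype.linearCombination_subtype_of_support_subset {R M ι : Type*} [Semiring R]
    [AddCommMonoid M] [Module R M] [Fintype ι] (v : ι → M) {s : Set ι} [Fintype s] {y : ι → R}
    (hy : support y ⊆ s) :
    Fintype.linearCombination R (fun i : s => v i) (fun i => y i) =
      Fintype.linearCombination R v y := by
  simp only [Fintype.linearCombination_apply]
  rw [Finset.sum_set_coe (f := fun i => y i • v i)]
  exact Fintype.sum_subset fun i hi => by simpa using hy (left_ne_zero_of_smul hi)

section Caratheodory

variable {𝕜 ι E : Type*} [Field 𝕜] [LinearOrder 𝕜] [IsStrictOrderedRing 𝕜] [Fintype ι]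
  [AddCommGroup E] [Module 𝕜 E] {v : ι → E}

theorem exists_nonneg_support_ssubset_linearCombination_eq {y g : ι → 𝕜} (hy : 0 ≤ y)
    (hg0 : g ≠ 0) (hgy : support g ⊆ support y) (hg : Fintype.linearCombination 𝕜 v g = 0) :
    ∃ z, 0 ≤ z ∧ support z ⊂ support y ∧
      Fintype.linearCombination 𝕜 v z = Fintype.linearCombination 𝕜 v y := by
  classical
  -- Move from `y` along the relation `g` until the first coordinate of `y` hits zero.
  obtain ⟨i₀, hi₀, hmin⟩ := (support g).toFinset.exists_min_image (fun i => y i / |g i|)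
    (by simpa [support_nonempty_iff] using hg0)
  rw [Set.mem_toFinset] at hi₀
  set τ := y i₀ / g i₀
  refine ⟨y - τ • g, fun i => ?_, ?_, by simp [hg]⟩
  · by_cases hgi : g i = 0
    · simpa [hgi] using hy i
    have hτ : |τ| * |g i| ≤ y i := by
      have := hmin i (by simpa using hgi)
      rw [abs_div, abs_of_nonneg (hy i₀)]
      rwa [le_div_iff₀ (abs_pos.mpr hgi)] at this
    have := le_abs_self (τ * g i)
    simp only [Pi.sub_apply, Pi.smul_apply, smul_eq_mul, Pi.zero_apply, sub_nonneg]
    rw [abs_mul] at this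
    linarith
  · refine Set.ssubset_iff_of_subset (fun i hi => ?_) |>.mpr ⟨i₀, hgy hi₀, ?_⟩
    · by_contra hyi
      have hgi : g i = 0 := by by_contra h; exact hyi (hgy h)
      simp_all
    · simp [τ, div_mul_cancel₀ _ (show g i₀ ≠ 0 from hi₀)]

theorem exists_nonneg_linearIndepOn_support_linearCombination_eq {y : ι → 𝕜} (hy : 0 ≤ y) :
    ∃ z, 0 ≤ z ∧ LinearIndepOn 𝕜 v (support z) ∧
      Fintype.linearCombination 𝕜 v z = Fintype.linearCombination 𝕜 v y := by
  induction hn : (support y).ncard using Nat.strong_induction_on generalizing y with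
  | _ n ih =>
    by_cases hli : LinearIndepOn 𝕜 v (support y)
    · exact ⟨y, hy, hli, rfl⟩
    obtain ⟨g, hg0, hgy, hg⟩ := exists_ne_zero_support_subset_linearCombination_eq_zero hli
    obtain ⟨z, hz, hzy, hzv⟩ := exists_nonneg_support_ssubset_linearCombination_eq hy hg0 hgy hg
    obtain ⟨w, hw, hwli, hwv⟩ := ih _ (hn ▸ Set.ncard_lt_ncard hzy (Set.toFinite _)) hz rfl
    exact ⟨w, hw, hwli, hwv.trans hzv⟩

end Caratheodory

section Farkas

variable {ι E : Type*} [Fintype ι] [AddCommGroup E] [Module ℝ E] [TopologicalSpace E]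
  [IsTopologicalAddGroup E] [ContinuousSMul ℝ E] [T2Space E]

theorem isClosed_image_linearCombination_Ici_zero (v : ι → E) :
    IsClosed (Fintype.linearCombination ℝ v '' Set.Ici 0) := by
  classical
  have hunion : Fintype.linearCombination ℝ v '' Set.Ici 0 =
      ⋃ s : {s : Set ι // LinearIndepOn ℝ v s},
        Fintype.linearCombination ℝ (fun i : s.1 => v i) '' Set.Ici 0 := by
    apply subset_antisymm
    · rintro _ ⟨y, hy, rfl⟩
      obtain ⟨z, hz, hzli, hzv⟩ :=
        exists_nonneg_linearIndepOn_support_linearCombination_eq (v := v) hy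
      exact Set.mem_iUnion.mpr ⟨⟨_, hzli⟩, fun i => z i, fun i => hz i,
        (Fintype.linearCombination_subtype_of_support_subset v subset_rfl).trans hzv⟩
    · refine Set.iUnion_subset fun s => ?_
      rintro _ ⟨z, hz, rfl⟩
      set y : ι → ℝ := fun i => if h : i ∈ s.1 then z ⟨i, h⟩ else 0
      have hys : support y ⊆ s.1 := fun i hi => by_contra fun h => hi (dif_neg h)
      refine ⟨y, fun i => dite_nonneg (fun h => hz ⟨i, h⟩) fun _ => le_rfl, ?_⟩
      rw [← Fintype.linearCombination_subtype_of_support_subset v hys]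
      simp [y]
  rw [hunion]
  refine isClosed_iUnion_of_finite fun s => ?_
  have hinj : LinearMap.ker (Fintype.linearCombination ℝ (fun i : s.1 => v i)) = ⊥ :=
    LinearMap.ker_eq_bot.mpr (linearIndependent_iff_injective_fintypeLinearCombination.mp s.2)
  exact (LinearMap.isClosedEmbedding_of_injective hinj).isClosedMap _ isClosed_Ici

theorem exists_nonneg_linearCombination_eq_or_exists_dual_nonneg [LocallyConvexSpace ℝ E]
    (v : ι → E) (w : E) :
    (∃ y, 0 ≤ y ∧ Fintype.linearCombination ℝ v y = w) ∨
      ∃ f : StrongDual ℝ E, (∀ i, 0 ≤ f (v i)) ∧ f w < 0 := by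
  classical
  refine or_iff_not_imp_left.mpr fun hw => ?_
  let C : ProperCone ℝ E :=
    { toSubmodule := (PointedCone.positive ℝ (ι → ℝ)).map (Fintype.linearCombination ℝ v)
      isClosed' := isClosed_image_linearCombination_Ici_zero v }
  obtain ⟨f, hf, hfw⟩ :=
    C.hyperplane_separation_point (x₀ := w) fun ⟨y, hy, hyw⟩ => hw ⟨y, hy, hyw⟩
  refine ⟨f, fun i => hf _ ⟨Pi.single i 1, Pi.single_nonneg.mpr zero_le_one, ?_⟩, hfw⟩
  simp [Fintype.linearCombination_apply_single]

end Farkas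

theorem exists_forall_apply_eq_dotProduct_add_mul {R κ : Type*} [CommSemiring R] [Fintype κ]
    (f : (κ → R) × R →ₗ[R] R) : ∃ d : κ → R, ∀ x t, f (x, t) = d ⬝ᵥ x + t * f (0, 1) := by
  classical
  refine ⟨(dotProductEquiv R κ).symm (f ∘ₗ LinearMap.inl R _ R), fun x t => ?_⟩
  have hx : f (x, 0) = (dotProductEquiv R κ).symm (f ∘ₗ LinearMap.inl R _ R) ⬝ᵥ x :=
    (LinearMap.congr_fun ((dotProductEquiv R κ).apply_symm_apply (f ∘ₗ LinearMap.inl R _ R)) x).symm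
  have ht : f (0, t) = t * f (0, 1) := by
    rw [← smul_eq_mul, ← map_smul, Prod.smul_mk, smul_zero, smul_eq_mul, mul_one]
  rw [← hx, ← ht, ← map_add, Prod.mk_add_mk, add_zero, zero_add]

namespace Matrix

variable {ι κ : Type*} [Fintype κ] {A : Matrix ι κ ℝ} {b : ι → ℝ} {c : κ → ℝ} {σ : ℝ}

theorem dotProduct_le_dotProduct_of_mulVec_le [Fintype ι] {x : κ → ℝ} {y : ι → ℝ}
    (hx : A *ᵥ x ≤ b) (hy : 0 ≤ y) (hAy : Aᵀ *ᵥ y = c) : c ⬝ᵥ x ≤ b ⬝ᵥ y := by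
  rw [← hAy, mulVec_transpose, ← dotProduct_mulVec, dotProduct_comm b]
  exact dotProduct_le_dotProduct_of_nonneg_left hx hy

theorem dotProduct_nonneg_of_mulVec_nonneg {x₀ d : κ → ℝ} (hx₀ : A *ᵥ x₀ ≤ b)
    (hσ : ∀ x, A *ᵥ x ≤ b → c ⬝ᵥ x ≤ σ) (hd : 0 ≤ A *ᵥ d) : 0 ≤ c ⬝ᵥ d := by
  by_contra! hcd
  set t := (σ - c ⬝ᵥ x₀ + 1) / -(c ⬝ᵥ d)
  have ht : 0 ≤ t := div_nonneg (by linarith [hσ x₀ hx₀]) (by linarith)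
  have hx : A *ᵥ (x₀ - t • d) ≤ b := by
    rw [mulVec_sub, mulVec_smul]
    exact (sub_le_self _ (smul_nonneg ht hd)).trans hx₀
  have hval : c ⬝ᵥ (x₀ - t • d) = σ + 1 := by
    have := hcd.ne
    simp only [dotProduct_sub, dotProduct_smul, smul_eq_mul, t]
    field_simp
    ring
  linarith [hσ _ hx]

theorem dotProduct_add_mul_nonneg_of_mulVec_add_smul_nonneg {x₀ d : κ → ℝ} {r : ℝ}
    (hx₀ : A *ᵥ x₀ ≤ b) (hσ : ∀ x, A *ᵥ x ≤ b → c ⬝ᵥ x ≤ σ) (hr : 0 ≤ r)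
    (hd : 0 ≤ A *ᵥ d + r • b) : 0 ≤ c ⬝ᵥ d + r * σ := by
  rcases hr.eq_or_lt with rfl | hr
  · simpa using dotProduct_nonneg_of_mulVec_nonneg hx₀ hσ (by simpa using hd)
  have hx : A *ᵥ (-r⁻¹ • d) ≤ b := fun i => by
    have := mul_nonneg (inv_nonneg.mpr hr.le) (hd i)
    simp only [mulVec_smul, Pi.smul_apply, Pi.add_apply, smul_eq_mul, mul_add,
      inv_mul_cancel_left₀ hr.ne'] at this ⊢
    linarith
  have := hσ _ hx
  rw [dotProduct_smul, smul_eq_mul, neg_mul, ← mul_neg, inv_mul_le_iff₀ hr] at this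
  linarith

theorem exists_nonneg_transpose_mulVec_eq_dotProduct_le [Fintype ι] {x₀ : κ → ℝ}
    (hx₀ : A *ᵥ x₀ ≤ b) (hσ : ∀ x, A *ᵥ x ≤ b → c ⬝ᵥ x ≤ σ) :
    ∃ y, 0 ≤ y ∧ Aᵀ *ᵥ y = c ∧ b ⬝ᵥ y ≤ σ := by
  rcases exists_nonneg_linearCombination_eq_or_exists_dual_nonneg
      (fun o : Option ι => o.elim ((0 : κ → ℝ), (1 : ℝ)) fun i => (A i, b i)) (c, σ) with
    ⟨y, hy, hyc⟩ | ⟨f, hf, hfc⟩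
  · rw [Fintype.linearCombination_apply, Fintype.sum_option] at hyc
    refine ⟨fun i => y (some i), fun i => hy (some i), ?_, ?_⟩
    · simpa [mulVec_transpose, vecMul_eq_sum, Prod.fst_sum] using congrArg Prod.fst hyc
    · have hσy := congrArg Prod.snd hyc
      simp only [Option.elim_none, Option.elim_some, Prod.snd_add, Prod.smul_snd, Prod.snd_sum,
        smul_eq_mul, mul_one] at hσy
      rw [dotProduct_comm, ← hσy]
      exact le_add_of_nonneg_left (hy none)
  · obtain ⟨d, hfd⟩ := exists_forall_apply_eq_dotProduct_add_mul (f : (κ → ℝ) × ℝ →ₗ[ℝ] ℝ)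
    simp only [ContinuousLinearMap.coe_coe] at hfd
    have hd : 0 ≤ A *ᵥ d + f (0, 1) • b := fun i => by
      have := hf (some i)
      rw [Option.elim_some, hfd, dotProduct_comm, mul_comm] at this
      exact this
    have := dotProduct_add_mul_nonneg_of_mulVec_add_smul_nonneg hx₀ hσ (r := f (0, 1)) (hf none) hd
    rw [hfd, dotProduct_comm, mul_comm] at hfc
    linarith

end Matrix

theorem strong_lp_duality_origin_feasible_general {m n : ℕ} (A : Matrix (Fin m) (Fin n) ℝ)
    (b : Fin m → ℝ) (hb : 0 ≤ b) (c : Fin n → ℝ)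
    (hbdd : BddAbove {v : ℝ | ∃ x : Fin n → ℝ, A.mulVec x ≤ b ∧ v = c ⬝ᵥ x}) :
    (∃ y : Fin m → ℝ, 0 ≤ y ∧ A.transpose.mulVec y = c) ∧
    sSup {v : ℝ | ∃ x : Fin n → ℝ, A.mulVec x ≤ b ∧ v = c ⬝ᵥ x} =
      sInf {w : ℝ | ∃ y : Fin m → ℝ, A.transpose.mulVec y = c ∧ 0 ≤ y ∧ w = b ⬝ᵥ y} := by
  have h0 : A *ᵥ 0 ≤ b := by simpa using hb
  obtain ⟨y, hy, hAy, hby⟩ := Matrix.exists_nonneg_transpose_mulVec_eq_dotProduct_le h0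
    fun x hx => le_csSup hbdd ⟨x, hx, rfl⟩
  refine ⟨⟨y, hy, hAy⟩, le_antisymm ?_ ?_⟩
  · refine le_csInf ⟨_, y, hAy, hy, rfl⟩ ?_
    rintro _ ⟨y', hAy', hy', rfl⟩
    refine csSup_le ⟨_, 0, h0, rfl⟩ ?_
    rintro _ ⟨x, hx, rfl⟩
    exact Matrix.dotProduct_le_dotProduct_of_mulVec_le hx hy' hAy'
  · refine (csInf_le ?_ ?_).trans hby
    · refine ⟨0, ?_⟩
      rintro _ ⟨y', -, hy', rfl⟩
      exact dotProduct_nonneg_of_nonneg hb hy'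
    · exact ⟨y, hAy, hy, rfl⟩

theorem strong_lp_duality_origin_feasible {m n : ℕ} (A : Matrix (Fin m) (Fin n) ℝ)
    (b : Fin m → ℝ) (hb : 0 ≤ b) (c : Fin n → ℝ) (hc : c ≠ 0)
    (hbdd : BddAbove {v : ℝ | ∃ x : Fin n → ℝ, A.mulVec x ≤ b ∧ v = c ⬝ᵥ x}) :
    (∃ y : Fin m → ℝ, 0 ≤ y ∧ A.transpose.mulVec y = c) ∧
    sSup {v : ℝ | ∃ x : Fin n → ℝ, A.mulVec x ≤ b ∧ v = c ⬝ᵥ x} =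
      sInf {w : ℝ | ∃ y : Fin m → ℝ, A.transpose.mulVec y = c ∧ 0 ≤ y ∧ w = b ⬝ᵥ y} :=
  strong_lp_duality_origin_feasible_general A b hb c hbdd
end
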